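/- arXiv:1908.08319 — 2 statements merged into one kernel-verified Lean document; each statement's English description precedes it below -/
import Mathlib

section
/- (Fractional Bellman–Gronwall inequality.) Let α ∈ (0,1), a ≤ b, ε₁ ≥ 0, ε₂ ≥ 0, and let ψ : [a,b] → ℝ be continuous with 0 ≤ ψ(t) ≤ ε₁ + (ε₂/Γ(α)) ∫_a^t (max_{ξ∈[a,τ]} ψ(ξ)) / (t−τ)^{1−α} dτ for all t ∈ [a,b]. Then ψ(t) ≤ ε₁ E_α((t−a)^α ε₂) for all t ∈ [a,b], where E_α(z) = Σ_{k=0}^∞ z^k/Γ(αk+1) is the one-parameter Mittag-Leffler function. -/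
/-
Replace `ψ` by its running maximum `M t = sup_{[a,t]} ψ`. Since `M` is monotone and nonnegative,
its Riemann–Liouville integral `I^α M t = Γ(α)⁻¹ ∫_0^{t-a} M (t - u) u^{α-1} du` is monotone in `t`,
so `M` itself satisfies `M ≤ ε₁ + ε₂ I^α M`. Iterating this `n` times with the Beta integral
`I^α (τ - a)^{αk} = Γ(αk+1) / Γ(αk+α+1) (t - a)^{α(k+1)}` gives
`M t ≤ ε₁ Σ_{k<n} z^k / Γ(αk+1) + M b z^n / Γ(αn+1)` with `z = (t - a)^α ε₂`. The remainder
tends to `0` because the Mittag-Leffler series converges: log-convexity of `Γ` gives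
`Γ(x + α) ≥ Γ(x) (x - 1)^α`, so the ratio of its consecutive terms is at most `|z| / (αn)^α → 0`.
-/

open MeasureTheory Set Real

/-- The one-parameter Mittag-Leffler function `E_α(z) = Σ_{k} z^k / Γ(αk+1)`. -/
noncomputable def mittagLefflerOne (α z : ℝ) : ℝ :=
  ∑' k : ℕ, z ^ k / Real.Gamma (α * k + 1)

lemma Gamma_mul_rpow_le_Gamma_add {α x : ℝ} (hα : 0 < α) (hx : 1 < x) :
    Gamma x * (x - 1) ^ α ≤ Gamma (x + α) := by
  have hx1 : 0 < x - 1 := by linarith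
  have hΓ1 : 0 < Gamma (x - 1) := Gamma_pos_of_pos hx1
  have hΓ : Gamma x = (x - 1) * Gamma (x - 1) := by
    simpa using Gamma_add_one hx1.ne'
  have hslope := convexOn_log_Gamma.slope_mono_adjacent (x := x - 1) (y := x) (z := x + α)
    (by simpa using hx1) (by simp; linarith) (by linarith) (by linarith)
  simp only [Function.comp, hΓ, Real.log_mul hx1.ne' hΓ1.ne', sub_sub_cancel, div_one,
    add_sub_cancel_left, add_sub_cancel_right, le_div_iff₀ hα] at hslope
  rw [← Real.log_le_log_iff (by positivity) (Gamma_pos_of_pos (by linarith)), hΓ,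
    Real.log_mul (by positivity) (by positivity), Real.log_mul hx1.ne' hΓ1.ne',
    Real.log_rpow hx1]
  linarith

lemma summable_mittagLeffler {α : ℝ} (hα : 0 < α) (z : ℝ) :
    Summable fun k : ℕ => z ^ k / Gamma (α * k + 1) := by
  refine summable_of_ratio_norm_eventually_le (r := 1 / 2) (by norm_num) ?_
  have hgrow : Filter.Tendsto (fun n : ℕ => (α * n) ^ α) Filter.atTop Filter.atTop :=
    (tendsto_rpow_atTop hα).comp (tendsto_natCast_atTop_atTop.const_mul_atTop hα)
  filter_upwards [hgrow.eventually_ge_atTop (2 * |z|), Filter.eventually_ge_atTop 1]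
    with n hzn hn
  have hn' : (1 : ℝ) ≤ n := by exact_mod_cast hn
  have hΓ : 0 < Gamma (α * n + 1) := Gamma_pos_of_pos (by positivity)
  have hratio : Gamma (α * n + 1) * (α * n) ^ α ≤ Gamma (α * (n + 1 : ℕ) + 1) := by
    have := Gamma_mul_rpow_le_Gamma_add hα (x := α * n + 1) (by nlinarith)
    rwa [add_sub_cancel_right, ← add_right_comm, ← mul_add_one, ← Nat.cast_add_one] at this
  have hΓ' : 0 < Gamma (α * (n + 1 : ℕ) + 1) := Gamma_pos_of_pos (by positivity)
  rw [norm_div, norm_div, norm_pow, norm_pow, Real.norm_of_nonneg hΓ.le,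
    Real.norm_of_nonneg hΓ'.le, div_le_iff₀ hΓ']
  calc ‖z‖ ^ (n + 1) = ‖z‖ * ‖z‖ ^ n := pow_succ' _ _
    _ ≤ (α * n) ^ α / 2 * ‖z‖ ^ n := by gcongr; rw [Real.norm_eq_abs]; linarith
    _ = 1 / 2 * (‖z‖ ^ n / Gamma (α * n + 1)) * (Gamma (α * n + 1) * (α * n) ^ α) := by
        field_simp
    _ ≤ 1 / 2 * (‖z‖ ^ n / Gamma (α * n + 1)) * Gamma (α * (n + 1 : ℕ) + 1) := by gcongr

lemma integral_rpow_mul_sub_rpow {s r x : ℝ} (hs : 0 < s) (hr : 0 < r) (hx : 0 < x) :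
    ∫ u in 0..x, u ^ (s - 1) * (x - u) ^ (r - 1) =
      x ^ (s + r - 1) * (Gamma s * Gamma r / Gamma (s + r)) := by
  have hC := Complex.betaIntegral_scaled s r hx
  rw [Complex.betaIntegral_eq_Gamma_mul_div _ _ (by simpa) (by simpa)] at hC
  apply Complex.ofReal_injective
  rw [← intervalIntegral.integral_ofReal]
  push_cast [Complex.ofReal_cpow hx.le, ← Complex.Gamma_ofReal]
  rw [← hC]
  refine intervalIntegral.integral_congr fun u hu => ?_
  rw [uIcc_of_le hx.le] at hu
  rw [Complex.ofReal_cpow hu.1, Complex.ofReal_cpow (sub_nonneg.2 hu.2)]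
  push_cast
  rfl

noncomputable def riemannLiouville (α a : ℝ) (f : ℝ → ℝ) (t : ℝ) : ℝ :=
  (Gamma α)⁻¹ * ∫ τ in a..t, f τ * (t - τ) ^ (α - 1)

section RiemannLiouville

variable {α a t : ℝ} {f g : ℝ → ℝ}

lemma intervalIntegrable_sub_rpow (hα : 0 < α) (a t : ℝ) :
    IntervalIntegrable (fun τ => (t - τ) ^ (α - 1)) volume a t := by
  simpa using ((intervalIntegral.intervalIntegrable_rpow' (a := t - a) (b := 0)
    (r := α - 1) (by linarith)).comp_sub_left t)

lemma intervalIntegrable_mul_sub_rpow_of_continuousOn (hα : 0 < α)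
    (hf : ContinuousOn f (uIcc a t)) :
    IntervalIntegrable (fun τ => f τ * (t - τ) ^ (α - 1)) volume a t :=
  (intervalIntegrable_sub_rpow hα a t).continuousOn_mul hf

lemma intervalIntegrable_mul_sub_rpow_of_monotoneOn (hα : 0 < α) (hat : a ≤ t)
    (hf : MonotoneOn f (Icc a t)) :
    IntervalIntegrable (fun τ => f τ * (t - τ) ^ (α - 1)) volume a t := by
  rw [intervalIntegrable_iff_integrableOn_Icc_of_le hat]
  have hker := (intervalIntegrable_iff_integrableOn_Icc_of_le hat).1
    (intervalIntegrable_sub_rpow hα a t)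
  exact hker.mul_of_top_right
    (hf.memLp_top (isLeast_Icc hat) (isGreatest_Icc hat) measurableSet_Icc)

lemma riemannLiouville_const_mul (c : ℝ) (f : ℝ → ℝ) :
    riemannLiouville α a (fun τ => c * f τ) t = c * riemannLiouville α a f t := by
  simp only [riemannLiouville, mul_assoc, intervalIntegral.integral_const_mul]
  ring

lemma riemannLiouville_add
    (hf : IntervalIntegrable (fun τ => f τ * (t - τ) ^ (α - 1)) volume a t)
    (hg : IntervalIntegrable (fun τ => g τ * (t - τ) ^ (α - 1)) volume a t) :
    riemannLiouville α a (fun τ => f τ + g τ) t =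
      riemannLiouville α a f t + riemannLiouville α a g t := by
  simp only [riemannLiouville, add_mul, intervalIntegral.integral_add hf hg, mul_add]

lemma riemannLiouville_finset_sum {ι : Type*} (s : Finset ι) {f : ι → ℝ → ℝ}
    (hf : ∀ i ∈ s, IntervalIntegrable (fun τ => f i τ * (t - τ) ^ (α - 1)) volume a t) :
    riemannLiouville α a (fun τ => ∑ i ∈ s, f i τ) t = ∑ i ∈ s, riemannLiouville α a (f i) t := by
  simp only [riemannLiouville, Finset.sum_mul, intervalIntegral.integral_finsetSum hf,
    Finset.mul_sum]

lemma riemannLiouville_mono (hα : 0 < α) (hat : a ≤ t)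
    (hf : IntervalIntegrable (fun τ => f τ * (t - τ) ^ (α - 1)) volume a t)
    (hg : IntervalIntegrable (fun τ => g τ * (t - τ) ^ (α - 1)) volume a t)
    (hfg : ∀ τ ∈ Icc a t, f τ ≤ g τ) :
    riemannLiouville α a f t ≤ riemannLiouville α a g t := by
  refine mul_le_mul_of_nonneg_left ?_ (inv_nonneg.2 (Gamma_pos_of_pos hα).le)
  refine intervalIntegral.integral_mono_on hat hf hg fun τ hτ => ?_
  exact mul_le_mul_of_nonneg_right (hfg τ hτ) (rpow_nonneg (sub_nonneg.2 hτ.2) _)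

lemma riemannLiouville_sub_rpow {β : ℝ} (hα : 0 < α) (hβ : -1 < β) (hat : a < t) :
    riemannLiouville α a (fun τ => (τ - a) ^ β) t =
      Gamma (β + 1) / Gamma (β + α + 1) * (t - a) ^ (β + α) := by
  have hshift := intervalIntegral.integral_comp_sub_right
    (fun u => u ^ β * (t - a - u) ^ (α - 1)) a (a := a) (b := t)
  have hbeta := integral_rpow_mul_sub_rpow (s := β + 1) (by linarith) hα (sub_pos.2 hat)
  simp only [sub_sub_sub_cancel_right, sub_self, add_sub_cancel_right] at hshift hbeta
  rw [riemannLiouville, hshift, hbeta, add_right_comm, add_sub_cancel_right]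
  field_simp [(Gamma_pos_of_pos hα).ne']

lemma riemannLiouville_monotoneOn {b : ℝ} (hα : 0 < α) (hf : MonotoneOn f (Icc a b))
    (hf0 : ∀ t ∈ Icc a b, 0 ≤ f t)
    (hint : ∀ t ∈ Icc a b, IntervalIntegrable (fun τ => f τ * (t - τ) ^ (α - 1)) volume a t) :
    MonotoneOn (riemannLiouville α a f) (Icc a b) := by
  have hsubst : ∀ t, ∫ τ in a..t, f τ * (t - τ) ^ (α - 1) =
      ∫ u in 0..t - a, f (t - u) * u ^ (α - 1) := fun t => by
    simpa using intervalIntegral.integral_comp_sub_left (fun u => f (t - u) * u ^ (α - 1)) t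
      (a := a) (b := t)
  have hint' : ∀ t ∈ Icc a b,
      IntervalIntegrable (fun u => f (t - u) * u ^ (α - 1)) volume 0 (t - a) := fun t ht => by
    simpa using ((hint t ht).comp_sub_left t).symm
  intro s hs t ht hst
  refine mul_le_mul_of_nonneg_left ?_ (inv_nonneg.2 (Gamma_pos_of_pos hα).le)
  have hsa : 0 ≤ s - a := sub_nonneg.2 hs.1
  rw [hsubst, hsubst]
  calc ∫ u in 0..s - a, f (s - u) * u ^ (α - 1)
      ≤ ∫ u in 0..s - a, f (t - u) * u ^ (α - 1) := by
        refine intervalIntegral.integral_mono_on hsa (hint' s hs)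
          ((hint' t ht).mono_set ?_) fun u hu => ?_
        · exact uIcc_subset_uIcc_left (by rw [uIcc_of_le (by linarith)]; exact ⟨hsa, by linarith⟩)
        · refine mul_le_mul_of_nonneg_right (hf ⟨?_, ?_⟩ ⟨?_, ?_⟩ (by linarith))
            (rpow_nonneg hu.1 _) <;> linarith [hu.1, hu.2, hs.2, ht.2]
    _ ≤ ∫ u in 0..t - a, f (t - u) * u ^ (α - 1) := by
        refine intervalIntegral.integral_mono_interval le_rfl hsa (by linarith) ?_ (hint' t ht)
        filter_upwards [ae_restrict_mem measurableSet_Ioc] with u hu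
        exact mul_nonneg (hf0 _ ⟨by linarith [hu.2], by linarith [hu.1, ht.2]⟩)
          (rpow_nonneg hu.1.le _)

end RiemannLiouville

lemma mul_riemannLiouville_mittagLeffler_term {α a t : ℝ} (hα : 0 < α) (hat : a ≤ t) (ε : ℝ)
    (k : ℕ) :
    ε * riemannLiouville α a (fun τ => ((τ - a) ^ α * ε) ^ k / Gamma (α * k + 1)) t =
      ((t - a) ^ α * ε) ^ (k + 1) / Gamma (α * (k + 1 : ℕ) + 1) := by
  obtain rfl | hat := hat.eq_or_lt
  · simp [riemannLiouville, zero_rpow hα.ne']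
  have hpow : ∀ τ, a ≤ τ → ∀ n : ℕ, ((τ - a) ^ α * ε) ^ n = ε ^ n * (τ - a) ^ (α * n) :=
      fun τ hτ n => by
    rw [mul_pow, ← rpow_natCast, ← rpow_mul (sub_nonneg.2 hτ), mul_comm]
  have hcongr : riemannLiouville α a (fun τ => ((τ - a) ^ α * ε) ^ k / Gamma (α * k + 1)) t =
      riemannLiouville α a (fun τ => ε ^ k / Gamma (α * k + 1) * (τ - a) ^ (α * k)) t := by
    unfold riemannLiouville
    congr 1
    refine intervalIntegral.integral_congr fun τ hτ => ?_
    rw [uIcc_of_le hat.le] at hτ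
    simp only [hpow τ hτ.1]
    ring
  rw [hcongr, riemannLiouville_const_mul,
    riemannLiouville_sub_rpow hα (by linarith [show 0 ≤ α * k by positivity]) hat,
    hpow t hat.le, Nat.cast_add_one, mul_add_one, pow_succ, add_right_comm]
  field_simp [(Gamma_pos_of_pos (by positivity : 0 < α * k + 1)).ne']

section Gronwall

variable {α a b ε₁ ε₂ K : ℝ} {φ : ℝ → ℝ}

lemma le_sum_add_of_le_add_riemannLiouville (hα : 0 < α) (hε₂ : 0 ≤ ε₂)
    (hφK : ∀ t ∈ Icc a b, φ t ≤ K)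
    (hφint : ∀ t ∈ Icc a b, IntervalIntegrable (fun τ => φ τ * (t - τ) ^ (α - 1)) volume a t)
    (hφ : ∀ t ∈ Icc a b, φ t ≤ ε₁ + ε₂ * riemannLiouville α a φ t) (n : ℕ) :
    ∀ t ∈ Icc a b, φ t ≤ ε₁ * ∑ k ∈ Finset.range n, ((t - a) ^ α * ε₂) ^ k / Gamma (α * k + 1) +
      K * (((t - a) ^ α * ε₂) ^ n / Gamma (α * n + 1)) := by
  set E : ℕ → ℝ → ℝ := fun k τ => ((τ - a) ^ α * ε₂) ^ k / Gamma (α * k + 1) with hE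
  have hE0 : ∀ τ, E 0 τ = 1 := by simp [hE]
  have hEc : ∀ k, Continuous (E k) := fun k =>
    (((continuous_rpow_const hα.le).comp (continuous_sub_right a)).mul continuous_const).pow k
      |>.div_const _
  have hint : ∀ {g : ℝ → ℝ} (t : ℝ), Continuous g →
      IntervalIntegrable (fun τ => g τ * (t - τ) ^ (α - 1)) volume a t := fun t hg =>
    intervalIntegrable_mul_sub_rpow_of_continuousOn hα hg.continuousOn
  induction n with
  | zero =>
    intro t ht
    simpa [hE0] using hφK t ht
  | succ n ih =>
    intro t ht
    have hterm : ∀ k, ε₂ * riemannLiouville α a (E k) t = E (k + 1) t := fun k =>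
      mul_riemannLiouville_mittagLeffler_term hα ht.1 ε₂ k
    calc φ t ≤ ε₁ + ε₂ * riemannLiouville α a φ t := hφ t ht
      _ ≤ ε₁ + ε₂ * riemannLiouville α a
          (fun τ => ε₁ * ∑ k ∈ Finset.range n, E k τ + K * E n τ) t := by
        gcongr
        refine riemannLiouville_mono hα ht.1 (hφint t ht) (hint t (by fun_prop)) fun τ hτ => ?_
        exact ih τ ⟨hτ.1, hτ.2.trans ht.2⟩
      _ = ε₁ * ∑ k ∈ Finset.range (n + 1), E k t + K * E (n + 1) t := by
        rw [riemannLiouville_add (hint t (by fun_prop)) (hint t (by fun_prop)),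
          riemannLiouville_const_mul, riemannLiouville_const_mul,
          riemannLiouville_finset_sum _ fun k _ => hint t (hEc k), Finset.sum_range_succ', hE0,
          ← hterm, ← Finset.sum_congr rfl fun k _ => hterm k, ← Finset.mul_sum]
        ring

theorem le_mul_mittagLefflerOne_of_le_add_riemannLiouville (hα : 0 < α) (hε₂ : 0 ≤ ε₂)
    (hφK : ∀ t ∈ Icc a b, φ t ≤ K)
    (hφint : ∀ t ∈ Icc a b, IntervalIntegrable (fun τ => φ τ * (t - τ) ^ (α - 1)) volume a t)
    (hφ : ∀ t ∈ Icc a b, φ t ≤ ε₁ + ε₂ * riemannLiouville α a φ t) {t : ℝ} (ht : t ∈ Icc a b) :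
    φ t ≤ ε₁ * mittagLefflerOne α ((t - a) ^ α * ε₂) := by
  have hsum := summable_mittagLeffler hα ((t - a) ^ α * ε₂)
  have hlim := (hsum.hasSum.tendsto_sum_nat.const_mul ε₁).add
    (hsum.tendsto_atTop_zero.const_mul K)
  rw [mul_zero, add_zero] at hlim
  exact ge_of_tendsto' hlim fun n =>
    le_sum_add_of_le_add_riemannLiouville hα hε₂ hφK hφint hφ n t ht

end Gronwall

section RunningSup

variable {f : ℝ → ℝ} {a b t : ℝ}

lemma bddAbove_image_Icc_of_continuousOn (hf : ContinuousOn f (Icc a b)) (ht : t ≤ b) :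
    BddAbove (f '' Icc a t) :=
  (isCompact_Icc.image_of_continuousOn (hf.mono (Icc_subset_Icc_right ht))).bddAbove

lemma le_sSup_image_Icc (hf : ContinuousOn f (Icc a b)) (ht : t ∈ Icc a b) :
    f t ≤ sSup (f '' Icc a t) :=
  le_csSup (bddAbove_image_Icc_of_continuousOn hf ht.2) ⟨t, ⟨ht.1, le_rfl⟩, rfl⟩

lemma monotoneOn_sSup_image_Icc (hf : ContinuousOn f (Icc a b)) :
    MonotoneOn (fun t => sSup (f '' Icc a t)) (Icc a b) := fun _ hs _ ht hst =>
  csSup_le_csSup (bddAbove_image_Icc_of_continuousOn hf ht.2) ((nonempty_Icc.2 hs.1).image f)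
    (image_mono (Icc_subset_Icc_right hst))

end RunningSup

theorem fractional_gronwall_general (α a b ε₁ ε₂ : ℝ) (hα : α ∈ Set.Ioo (0 : ℝ) 1)
    (hε₂ : 0 ≤ ε₂)
    (ψ : ℝ → ℝ) (hψc : ContinuousOn ψ (Set.Icc a b))
    (hψ0 : ∀ t ∈ Set.Icc a b, 0 ≤ ψ t)
    (hψineq : ∀ t ∈ Set.Icc a b,
      ψ t ≤ ε₁ + (ε₂ / Real.Gamma α) *
        ∫ τ in a..t, (sSup (ψ '' Set.Icc a τ)) * (t - τ) ^ (α - 1)) :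
    ∀ t ∈ Set.Icc a b, ψ t ≤ ε₁ * mittagLefflerOne α ((t - a) ^ α * ε₂) := by
  set M : ℝ → ℝ := fun τ => sSup (ψ '' Icc a τ)
  have hψM : ∀ t ∈ Icc a b, ψ t ≤ M t := fun t ht => le_sSup_image_Icc hψc ht
  have hMmono : MonotoneOn M (Icc a b) := monotoneOn_sSup_image_Icc hψc
  have hMint : ∀ t ∈ Icc a b, IntervalIntegrable (fun τ => M τ * (t - τ) ^ (α - 1)) volume a t :=
    fun t ht => intervalIntegrable_mul_sub_rpow_of_monotoneOn hα.1 ht.1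
      (hMmono.mono (Icc_subset_Icc_right ht.2))
  have hRLmono := riemannLiouville_monotoneOn hα.1 hMmono
    (fun t ht => (hψ0 t ht).trans (hψM t ht)) hMint
  have hM : ∀ t ∈ Icc a b, M t ≤ ε₁ + ε₂ * riemannLiouville α a M t := fun t ht => by
    refine csSup_le ((nonempty_Icc.2 ht.1).image ψ) ?_
    rintro _ ⟨s, hs, rfl⟩
    have hs' : s ∈ Icc a b := ⟨hs.1, hs.2.trans ht.2⟩
    calc ψ s ≤ ε₁ + ε₂ * riemannLiouville α a M s := by
          simpa only [riemannLiouville, div_eq_mul_inv, mul_assoc] using hψineq s hs'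
      _ ≤ ε₁ + ε₂ * riemannLiouville α a M t := by gcongr; exact hRLmono hs' ht hs.2
  intro t ht
  have hb : b ∈ Icc a b := ⟨ht.1.trans ht.2, le_rfl⟩
  exact (hψM t ht).trans <| le_mul_mittagLefflerOne_of_le_add_riemannLiouville hα.1 hε₂
    (fun s hs => hMmono hs hb hs.2) hMint hM ht

/-- Fractional Bellman–Gronwall inequality: if a continuous nonnegative `ψ` satisfies
`ψ(t) ≤ ε₁ + (ε₂/Γ(α)) ∫_a^t (max_{[a,τ]} ψ) (t-τ)^{α-1} dτ` on `[a,b]`, then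
`ψ(t) ≤ ε₁ E_α((t-a)^α ε₂)` on `[a,b]`. -/
theorem fractional_gronwall (α a b ε₁ ε₂ : ℝ) (hα : α ∈ Set.Ioo (0 : ℝ) 1)
    (hab : a ≤ b) (hε₁ : 0 ≤ ε₁) (hε₂ : 0 ≤ ε₂)
    (ψ : ℝ → ℝ) (hψc : ContinuousOn ψ (Set.Icc a b))
    (hψ0 : ∀ t ∈ Set.Icc a b, 0 ≤ ψ t)
    (hψineq : ∀ t ∈ Set.Icc a b,
      ψ t ≤ ε₁ + (ε₂ / Real.Gamma α) *
        ∫ τ in a..t, (sSup (ψ '' Set.Icc a τ)) * (t - τ) ^ (α - 1)) :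
    ∀ t ∈ Set.Icc a b, ψ t ≤ ε₁ * mittagLefflerOne α ((t - a) ^ α * ε₂) :=
  fractional_gronwall_general α a b ε₁ ε₂ hα hε₂ ψ hψc hψ0 hψineq
end

section
/- Let α ∈ (0,1), t₀ ≤ t* < θ, A ∈ L^∞([t₀,θ], ℝ^{n×n}), and let F be the fundamental matrix satisfying the dual integral equation F(t,s) = Id/Γ(α) + ((t−s)^{1−α}/Γ(α)) ∫_s^t F(t,τ)A(τ)/((t−τ)^{1−α}(τ−s)^{1−α}) dτ. Then for every t ∈ (t*,θ], the identity Id + ∫_{t*}^t F(t,τ)A(τ)/(t−τ)^{1−α} dτ = (1/Γ(1−α)) ∫_{t*}^t F(t,τ)/((t−τ)^{1−α}(τ−t*)^α) dτ holds. -/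
/-!
Multiply the integral equation at `s` by the weight `(t - s)^(α-1) (s - t*)^(-α)` and integrate
over `s ∈ (t*, t)`. The factor `(t - s)^(1-α)` cancels, so the constant term contributes
`B(1-α, α) = Γ(1-α) Γ(α)`. In the remaining double integral over the triangle
`t* < s < τ < t` one exchanges the order of integration (Dirichlet's formula); the inner integral
`∫_{t*}^τ (s - t*)^(-α) (τ - s)^(α-1) ds` is again `B(1-α, α)`, independent of `τ`.
Dividing by `Γ(α) Γ(1-α)` gives the identity.
-/

open MeasureTheory Set Real ProbabilityTheory

theorem Set.Ioc_inter_Iio_of_le {α : Type*} [LinearOrder α] {a b c : α} (h : c ≤ b) :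
    Ioc a b ∩ Iio c = Ioo a c := by
  ext x
  simp only [mem_inter_iff, mem_Ioc, mem_Iio, mem_Ioo]
  grind

theorem ContinuousOn.memLp_top_restrict {X E : Type*} [TopologicalSpace X] [MeasurableSpace X]
    [OpensMeasurableSpace X] [NormedAddCommGroup E] [SecondCountableTopologyEither X E]
    {μ : Measure X} {s : Set X} {f : X → E} (hf : ContinuousOn f s) (hs : IsCompact s)
    (hsm : MeasurableSet s) : MemLp f ⊤ (μ.restrict s) := by
  obtain ⟨C, hC⟩ := hs.exists_bound_of_continuousOn hf
  exact memLp_top_of_bound (hf.aestronglyMeasurable hsm) C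
    ((ae_restrict_iff' hsm).2 (ae_of_all _ hC))

theorem integrableOn_sub_rpow {r a b : ℝ} (hr : -1 < r) (hab : a ≤ b) :
    IntegrableOn (fun τ => (b - τ) ^ r) (Ioc a b) := by
  have h := (intervalIntegral.intervalIntegrable_rpow' hr (a := b - a) (b := 0)).comp_sub_left b
  rw [sub_sub_cancel, sub_zero] at h
  exact (intervalIntegrable_iff_integrableOn_Ioc_of_le hab).1 h

theorem integral_rpow_mul_sub_rpow_s16 {p q c : ℝ} (hp : 0 < p) (hq : 0 < q) (hc : 0 < c) :
    ∫ x in (0 : ℝ)..c, x ^ (p - 1) * (c - x) ^ (q - 1) = c ^ (p + q - 1) * beta p q := by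
  have h := Complex.betaIntegral_scaled p q hc
  rw [Complex.betaIntegral_eq_Gamma_mul_div _ _ (by simpa) (by simpa)] at h
  have hlhs : ∫ x in (0 : ℝ)..c, (x : ℂ) ^ ((p : ℂ) - 1) * ((c : ℂ) - x) ^ ((q : ℂ) - 1)
      = ((∫ x in (0 : ℝ)..c, x ^ (p - 1) * (c - x) ^ (q - 1) : ℝ) : ℂ) := by
    rw [← intervalIntegral.integral_ofReal]
    refine intervalIntegral.integral_congr fun x hx => ?_
    rw [uIcc_of_le hc.le] at hx
    rw [Complex.ofReal_mul, Complex.ofReal_cpow hx.1, Complex.ofReal_cpow (sub_nonneg.2 hx.2)]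
    push_cast
    ring
  have hexp : (p : ℂ) + q - 1 = ((p + q - 1 : ℝ) : ℂ) := by push_cast; ring
  rw [hlhs, hexp, ← Complex.ofReal_cpow hc.le, ← Complex.ofReal_add, Complex.Gamma_ofReal,
    Complex.Gamma_ofReal, Complex.Gamma_ofReal] at h
  rw [beta]
  exact_mod_cast h

theorem integral_sub_rpow_mul_sub_rpow {p q a b : ℝ} (hp : 0 < p) (hq : 0 < q) (hab : a < b) :
    ∫ s in a..b, (s - a) ^ (p - 1) * (b - s) ^ (q - 1) = (b - a) ^ (p + q - 1) * beta p q := by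
  have h := intervalIntegral.integral_comp_sub_right
    (fun x => x ^ (p - 1) * (b - a - x) ^ (q - 1)) a (a := a) (b := b)
  simp only [sub_self, sub_sub_sub_cancel_right] at h
  rw [h, integral_rpow_mul_sub_rpow_s16 hp hq (sub_pos.2 hab)]

theorem integrableOn_sub_rpow_mul_sub_rpow {p q a b : ℝ} (hp : 0 < p) (hq : 0 < q) (hab : a < b) :
    IntegrableOn (fun s => (s - a) ^ (p - 1) * (b - s) ^ (q - 1)) (Ioc a b) := by
  -- a non-integrable function would have integral `0`
  refine (intervalIntegrable_iff_integrableOn_Ioc_of_le hab.le).1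
    (intervalIntegral.intervalIntegrable_of_integral_ne_zero ?_)
  rw [integral_sub_rpow_mul_sub_rpow hp hq hab]
  exact (mul_pos (rpow_pos_of_pos (sub_pos.2 hab) _) (beta_pos hp hq)).ne'

section TriangleKernel

variable {E : Type*} [NormedAddCommGroup E] [NormedSpace ℝ E] {a b p q s τ : ℝ}
  {ψ : ℝ → E}

noncomputable def triangleKernel (a p q : ℝ) (ψ : ℝ → E) (s τ : ℝ) : E :=
  if s < τ then ((s - a) ^ (p - 1) * (τ - s) ^ (q - 1)) • ψ τ else 0

theorem triangleKernel_eq_indicator_Iio :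
    (fun s => triangleKernel a p q ψ s τ) =
      (Iio τ).indicator (fun s => ((s - a) ^ (p - 1) * (τ - s) ^ (q - 1)) • ψ τ) := by
  ext s
  simp [triangleKernel, indicator_apply]

theorem triangleKernel_eq_indicator_Ioi :
    triangleKernel a p q ψ s =
      (Ioi s).indicator (fun τ => ((s - a) ^ (p - 1) * (τ - s) ^ (q - 1)) • ψ τ) := by
  ext τ
  simp [triangleKernel, indicator_apply]

theorem integrableOn_triangleKernel_left (hp : 0 < p) (hq : 0 < q) (hτ : τ ∈ Ioc a b) :
    IntegrableOn (fun s => triangleKernel a p q ψ s τ) (Ioc a b) := by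
  rw [triangleKernel_eq_indicator_Iio, integrableOn_indicator_iff measurableSet_Iio, inter_comm,
    Ioc_inter_Iio_of_le hτ.2]
  exact ((integrableOn_sub_rpow_mul_sub_rpow hp hq hτ.1).mono_set Ioo_subset_Ioc_self).smul_const
    _

theorem setIntegral_triangleKernel_left [CompleteSpace E] (hp : 0 < p) (hq : 0 < q)
    (hτ : τ ∈ Ioc a b) :
    ∫ s in Ioc a b, triangleKernel a p q ψ s τ =
      ((τ - a) ^ (p + q - 1) * beta p q) • ψ τ := by
  rw [triangleKernel_eq_indicator_Iio, setIntegral_indicator measurableSet_Iio,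
    Ioc_inter_Iio_of_le hτ.2, integral_smul_const, ← integral_Ioc_eq_integral_Ioo,
    ← intervalIntegral.integral_of_le hτ.1.le, integral_sub_rpow_mul_sub_rpow hp hq hτ.1]

theorem setIntegral_triangleKernel_right (hs : s ∈ Icc a b) :
    ∫ τ in Ioc a b, triangleKernel a p q ψ s τ =
      (s - a) ^ (p - 1) • ∫ τ in s..b, (τ - s) ^ (q - 1) • ψ τ := by
  rw [triangleKernel_eq_indicator_Ioi, setIntegral_indicator measurableSet_Ioi, Ioc_inter_Ioi,
    max_eq_right hs.1, intervalIntegral.integral_of_le hs.2, ← integral_smul]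
  simp only [mul_smul]

theorem norm_triangleKernel (hs : a < s) :
    ‖triangleKernel a p q ψ s τ‖ = triangleKernel a p q (fun τ => ‖ψ τ‖) s τ := by
  unfold triangleKernel
  split_ifs with h
  · rw [norm_smul, Real.norm_of_nonneg (by positivity), smul_eq_mul]
  · exact norm_zero

theorem aestronglyMeasurable_uncurry_triangleKernel {μ : Measure ℝ} [SFinite μ]
    (hψ : AEStronglyMeasurable ψ μ) :
    AEStronglyMeasurable (Function.uncurry (triangleKernel a p q ψ)) (μ.prod μ) := by
  have hK : Function.uncurry (triangleKernel a p q ψ) = {x : ℝ × ℝ | x.1 < x.2}.indicator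
      (fun x => ((x.1 - a) ^ (p - 1) * (x.2 - x.1) ^ (q - 1)) • ψ x.2) := by
    ext ⟨s, τ⟩
    simp [triangleKernel, indicator_apply]
  rw [hK]
  refine AEStronglyMeasurable.indicator ?_ (measurableSet_lt measurable_fst measurable_snd)
  exact (by fun_prop : Measurable fun x : ℝ × ℝ =>
    (x.1 - a) ^ (p - 1) * (x.2 - x.1) ^ (q - 1)).aestronglyMeasurable.smul hψ.comp_snd

theorem integrable_uncurry_triangleKernel (hp : 0 < p) (hq : 0 < q)
    (hψm : AEStronglyMeasurable ψ (volume.restrict (Ioc a b)))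
    (hψ : IntegrableOn (fun τ => (τ - a) ^ (p + q - 1) • ψ τ) (Ioc a b)) :
    Integrable (Function.uncurry (triangleKernel a p q ψ))
      ((volume.restrict (Ioc a b)).prod (volume.restrict (Ioc a b))) := by
  refine (integrable_prod_iff' (aestronglyMeasurable_uncurry_triangleKernel hψm)).2 ⟨?_, ?_⟩
  · filter_upwards [ae_restrict_mem measurableSet_Ioc] with τ hτ
    exact integrableOn_triangleKernel_left hp hq hτ
  · refine (hψ.norm.const_mul (beta p q)).congr ?_
    filter_upwards [ae_restrict_mem measurableSet_Ioc] with τ hτ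
    have hnorm : ∀ s ∈ Ioc a b, ‖triangleKernel a p q ψ s τ‖ =
        triangleKernel a p q (fun τ => ‖ψ τ‖) s τ := fun s hs => norm_triangleKernel hs.1
    simp only [Function.uncurry_apply_pair]
    rw [setIntegral_congr_fun measurableSet_Ioc hnorm, setIntegral_triangleKernel_left hp hq hτ,
      norm_smul, Real.norm_of_nonneg (rpow_nonneg (sub_nonneg.2 hτ.1.le) _), smul_eq_mul]
    ring

theorem integrableOn_rpow_smul_integral_rpow_smul (hp : 0 < p) (hq : 0 < q)
    (hψm : AEStronglyMeasurable ψ (volume.restrict (Ioc a b)))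
    (hψ : IntegrableOn (fun τ => (τ - a) ^ (p + q - 1) • ψ τ) (Ioc a b)) :
    IntegrableOn (fun s => (s - a) ^ (p - 1) • ∫ τ in s..b, (τ - s) ^ (q - 1) • ψ τ)
      (Ioc a b) := by
  refine (integrable_uncurry_triangleKernel hp hq hψm hψ).integral_prod_left.congr ?_
  filter_upwards [ae_restrict_mem measurableSet_Ioc] with s hs
  exact setIntegral_triangleKernel_right (Ioc_subset_Icc_self hs)

theorem integral_rpow_smul_integral_rpow_smul [CompleteSpace E] (hp : 0 < p) (hq : 0 < q)
    (hab : a ≤ b) (hψm : AEStronglyMeasurable ψ (volume.restrict (Ioc a b)))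
    (hψ : IntegrableOn (fun τ => (τ - a) ^ (p + q - 1) • ψ τ) (Ioc a b)) :
    ∫ s in a..b, (s - a) ^ (p - 1) • ∫ τ in s..b, (τ - s) ^ (q - 1) • ψ τ =
      beta p q • ∫ τ in a..b, (τ - a) ^ (p + q - 1) • ψ τ := by
  simp only [intervalIntegral.integral_of_le hab]
  calc ∫ s in Ioc a b, (s - a) ^ (p - 1) • ∫ τ in s..b, (τ - s) ^ (q - 1) • ψ τ
      = ∫ s in Ioc a b, ∫ τ in Ioc a b, triangleKernel a p q ψ s τ :=
        setIntegral_congr_fun measurableSet_Ioc fun s hs =>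
          (setIntegral_triangleKernel_right (Ioc_subset_Icc_self hs)).symm
    _ = ∫ τ in Ioc a b, ∫ s in Ioc a b, triangleKernel a p q ψ s τ :=
        integral_integral_swap (integrable_uncurry_triangleKernel hp hq hψm hψ)
    _ = ∫ τ in Ioc a b, ((τ - a) ^ (p + q - 1) * beta p q) • ψ τ :=
        setIntegral_congr_fun measurableSet_Ioc fun τ hτ =>
          setIntegral_triangleKernel_left hp hq hτ
    _ = beta p q • ∫ τ in Ioc a b, (τ - a) ^ (p + q - 1) • ψ τ := by
        rw [← integral_smul]
        simp only [smul_smul, mul_comm]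

end TriangleKernel

theorem integral_rpow_mul_rpow_smul_of_eq {E : Type*} [NormedAddCommGroup E] [NormedSpace ℝ E]
    [CompleteSpace E] {G ψ : ℝ → E} {e : E} {a b α : ℝ} (hα : α ∈ Ioo 0 1) (hab : a < b)
    (hψ : IntegrableOn ψ (Ioc a b))
    (hG : ∀ s ∈ Ioo a b,
      G s = e + (b - s) ^ (1 - α) • ∫ τ in s..b, (τ - s) ^ (α - 1) • ψ τ) :
    ∫ s in a..b, ((b - s) ^ (α - 1) * (s - a) ^ (-α)) • G s =
      (Gamma (1 - α) * Gamma α) • (e + ∫ τ in a..b, ψ τ) := by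
  have hp : 0 < 1 - α := sub_pos.2 hα.2
  have hβ : beta (1 - α) α = Gamma (1 - α) * Gamma α := by
    rw [beta, sub_add_cancel, Gamma_one, div_one]
  have hweight := integrableOn_sub_rpow_mul_sub_rpow hp hα.1 hab
  have hweight_int := integral_sub_rpow_mul_sub_rpow hp hα.1 hab
  have hψ' : IntegrableOn (fun τ => (τ - a) ^ (1 - α + α - 1) • ψ τ) (Ioc a b) := by
    simpa using hψ
  have hinner := integrableOn_rpow_smul_integral_rpow_smul hp hα.1 hψ.aestronglyMeasurable hψ'
  have hinner_int :=
    integral_rpow_smul_integral_rpow_smul hp hα.1 hab.le hψ.aestronglyMeasurable hψ'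
  simp only [sub_sub_cancel_left, sub_add_cancel, sub_self, rpow_zero, one_mul, one_smul, hβ]
    at hweight hweight_int hinner hinner_int
  calc ∫ s in a..b, ((b - s) ^ (α - 1) * (s - a) ^ (-α)) • G s
      = ∫ s in a..b, ((s - a) ^ (-α) * (b - s) ^ (α - 1)) • e +
          (s - a) ^ (-α) • ∫ τ in s..b, (τ - s) ^ (α - 1) • ψ τ := by
        simp only [intervalIntegral.integral_of_le hab.le, integral_Ioc_eq_integral_Ioo]
        refine setIntegral_congr_fun measurableSet_Ioo fun s hs => ?_
        have hcancel : (b - s) ^ (α - 1) * (b - s) ^ (1 - α) = 1 := by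
          rw [← rpow_add (sub_pos.2 hs.2)]
          norm_num
        rw [hG s hs, smul_add, smul_smul, mul_comm ((b - s) ^ (α - 1))]
        congr 2
        linear_combination (s - a) ^ (-α) * hcancel
    _ = (Gamma (1 - α) * Gamma α) • (e + ∫ τ in a..b, ψ τ) := by
        rw [intervalIntegral.integral_add
            ((intervalIntegrable_iff_integrableOn_Ioc_of_le hab.le).2 (hweight.smul_const e))
            ((intervalIntegrable_iff_integrableOn_Ioc_of_le hab.le).2 hinner),
          intervalIntegral.integral_smul_const, hweight_int, hinner_int, smul_add]

theorem fundamental_matrix_dual_identity_general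
    (n : ℕ) (α t₀ tst θ : ℝ) (hα : α ∈ Set.Ioo (0 : ℝ) 1)
    (h₁ : t₀ ≤ tst)
    (A : ℝ → (EuclideanSpace ℝ (Fin n) →L[ℝ] EuclideanSpace ℝ (Fin n)))
    (hAm : Measurable A)
    (hAb : eLpNorm A ⊤ (volume.restrict (Set.Icc t₀ θ)) < ⊤)
    (F : ℝ → ℝ → (EuclideanSpace ℝ (Fin n) →L[ℝ] EuclideanSpace ℝ (Fin n)))
    (hFc : ∀ t ∈ Set.Icc t₀ θ, ContinuousOn (fun s => F t s) (Set.Icc t₀ t))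
    (hFeq : ∀ t ∈ Set.Icc t₀ θ, ∀ s ∈ Set.Icc t₀ t,
      F t s = (Real.Gamma α)⁻¹ • (1 : EuclideanSpace ℝ (Fin n) →L[ℝ] EuclideanSpace ℝ (Fin n))
        + ((t - s) ^ (1 - α) / Real.Gamma α) •
            ∫ τ in s..t, ((t - τ) ^ (α - 1) * (τ - s) ^ (α - 1)) • (F t τ * A τ)) :
    ∀ t ∈ Set.Ioc tst θ,
      (1 : EuclideanSpace ℝ (Fin n) →L[ℝ] EuclideanSpace ℝ (Fin n))
          + (∫ τ in tst..t, ((t - τ) ^ (α - 1)) • (F t τ * A τ))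
        = (Real.Gamma (1 - α))⁻¹ •
            ∫ τ in tst..t, ((t - τ) ^ (α - 1) * (τ - tst) ^ (-α)) • F t τ := by
  intro t ⟨htst, htθ⟩
  have htI : t ∈ Icc t₀ θ := ⟨h₁.trans htst.le, htθ⟩
  have hsub : Ioc tst t ⊆ Icc t₀ t := fun τ hτ => ⟨h₁.trans hτ.1.le, hτ.2⟩
  have hΓ : 0 < Gamma α := Gamma_pos_of_pos hα.1
  have hFA : MemLp (fun τ => F t τ * A τ) ⊤ (volume.restrict (Ioc tst t)) :=
    (MemLp.mono_measure (Measure.restrict_mono (hsub.trans (Icc_subset_Icc_right htθ)) le_rfl)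
      ⟨hAm.aestronglyMeasurable, hAb⟩).mul'
    (((hFc t htI).memLp_top_restrict isCompact_Icc measurableSet_Icc).mono_measure
      (Measure.restrict_mono hsub le_rfl))
  have hψ : IntegrableOn (fun τ => (t - τ) ^ (α - 1) • (F t τ * A τ)) (Ioc tst t) :=
    (integrableOn_sub_rpow (by linarith [hα.1]) htst.le).smul_of_top_left hFA
  have hG : ∀ s ∈ Ioo tst t, Gamma α • F t s = 1 + (t - s) ^ (1 - α) •
      ∫ τ in s..t, (τ - s) ^ (α - 1) • ((t - τ) ^ (α - 1) • (F t τ * A τ)) := by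
    intro s hs
    simp only [smul_smul, mul_comm ((_ - s) ^ (α - 1))]
    rw [hFeq t htI s (hsub (Ioo_subset_Ioc_self hs)), smul_add, smul_smul, smul_smul,
      mul_inv_cancel₀ hΓ.ne', one_smul, mul_div_cancel₀ _ hΓ.ne']
  have key := integral_rpow_mul_rpow_smul_of_eq hα htst hψ hG
  simp only [smul_comm _ (Gamma α)] at key
  rw [intervalIntegral.integral_smul, mul_comm, mul_smul] at key
  rw [smul_right_injective _ hΓ.ne' key, inv_smul_smul₀ (Gamma_pos_of_pos (sub_pos.2 hα.2)).ne']

/-- If `F` satisfies the dual fundamental-matrix integral equation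
`F(t,s) = Id/Γ(α) + ((t-s)^{1-α}/Γ(α)) ∫_s^t (t-τ)^{α-1}(τ-s)^{α-1} F(t,τ)A(τ) dτ`,
then for every `t ∈ (t*,θ]`,
`Id + ∫_{t*}^t (t-τ)^{α-1} F(t,τ)A(τ) dτ
  = (1/Γ(1-α)) ∫_{t*}^t (t-τ)^{α-1}(τ-t*)^{-α} F(t,τ) dτ`. -/
theorem fundamental_matrix_dual_identity
    (n : ℕ) (α t₀ tst θ : ℝ) (hα : α ∈ Set.Ioo (0 : ℝ) 1)
    (h₁ : t₀ ≤ tst) (h₂ : tst < θ)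
    (A : ℝ → (EuclideanSpace ℝ (Fin n) →L[ℝ] EuclideanSpace ℝ (Fin n)))
    (hAm : Measurable A)
    (hAb : eLpNorm A ⊤ (volume.restrict (Set.Icc t₀ θ)) < ⊤)
    (F : ℝ → ℝ → (EuclideanSpace ℝ (Fin n) →L[ℝ] EuclideanSpace ℝ (Fin n)))
    (hFc : ∀ t ∈ Set.Icc t₀ θ, ContinuousOn (fun s => F t s) (Set.Icc t₀ t))
    (hFeq : ∀ t ∈ Set.Icc t₀ θ, ∀ s ∈ Set.Icc t₀ t,
      F t s = (Real.Gamma α)⁻¹ • (1 : EuclideanSpace ℝ (Fin n) →L[ℝ] EuclideanSpace ℝ (Fin n))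
        + ((t - s) ^ (1 - α) / Real.Gamma α) •
            ∫ τ in s..t, ((t - τ) ^ (α - 1) * (τ - s) ^ (α - 1)) • (F t τ * A τ)) :
    ∀ t ∈ Set.Ioc tst θ,
      (1 : EuclideanSpace ℝ (Fin n) →L[ℝ] EuclideanSpace ℝ (Fin n))
          + (∫ τ in tst..t, ((t - τ) ^ (α - 1)) • (F t τ * A τ))
        = (Real.Gamma (1 - α))⁻¹ •
            ∫ τ in tst..t, ((t - τ) ^ (α - 1) * (τ - tst) ^ (-α)) • F t τ :=
  fundamental_matrix_dual_identity_general n α t₀ tst θ hα h₁ A hAm hAb F hFc hFeq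
end
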